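/- arXiv:2204.07320 — 3 statements merged into one kernel-verified Lean document; each statement's English description precedes it below -/
import Mathlib

section
/- Let θ : ℝ → ℂ be bounded measurable, ξ₀ ∈ ℝ, and suppose there is an open interval I containing ξ₀ with inf_{ξ ∈ I} |θ(ξ)| > 0. Define S(τ) = ∫_ℝ |θ(ξ)|² / (1 + (ξ - ξ₀)² |θ(ξ)|² τ) dξ. Then there exists a constant C₂ > 0 (depending on θ and ξ₀ but not on τ) such that S(τ) ≥ C₂ τ^{-1/2} for all τ ≥ 1. -/
open MeasureTheory

/-- Lower bound for S(τ): if |θ| is bounded below on an open interval containing ξ₀,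
    then S(τ) ≥ C₂ τ^{-1/2} for all τ ≥ 1, for some C₂ > 0. -/
theorem stmt_1 (θ : ℝ → ℂ) (ξ₀ : ℝ) (hθm : Measurable θ)
    (hθb : eLpNorm θ ⊤ volume < ⊤)
    (hI : ∃ r > (0 : ℝ), 0 < ⨅ ξ : Set.Ioo (ξ₀ - r) (ξ₀ + r), ‖θ (ξ : ℝ)‖) :
    ∃ C₂ > (0 : ℝ), ∀ τ : ℝ, 1 ≤ τ →
      ENNReal.ofReal (C₂ * τ ^ (-(1 / 2) : ℝ))
        ≤ ∫⁻ ξ : ℝ, ENNReal.ofReal (‖θ ξ‖ ^ 2 / (1 + (ξ - ξ₀) ^ 2 * ‖θ ξ‖ ^ 2 * τ)) := by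
  obtain ⟨r, hr, hm⟩ := hI
  set m := ⨅ ξ : Set.Ioo (ξ₀ - r) (ξ₀ + r), ‖θ (ξ : ℝ)‖ with hmdef
  have hmle : ∀ ξ ∈ Set.Ioo (ξ₀ - r) (ξ₀ + r), m ≤ ‖θ ξ‖ := by
    intro ξ hξ
    exact ciInf_le ⟨0, by rintro x ⟨y, rfl⟩; positivity⟩ (⟨ξ, hξ⟩ : Set.Ioo _ _)
  set c := m ^ 2 / (1 + m ^ 2) with hcdef
  have hc : 0 < c := by positivity
  set b := min r 1 with hbdef
  have hb : 0 < b := lt_min hr one_pos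
  have hb1 : b ≤ 1 := min_le_right _ _
  refine ⟨c * b, by positivity, ?_⟩
  intro τ hτ
  have hτ0 : (0 : ℝ) < τ := lt_of_lt_of_le one_pos hτ
  have hτp : 0 < τ ^ (-(1 / 2) : ℝ) := Real.rpow_pos_of_pos hτ0 _
  set δ := b * τ ^ (-(1 / 2) : ℝ) with hδdef
  have hδ : 0 < δ := mul_pos hb hτp
  have hτple : τ ^ (-(1 / 2) : ℝ) ≤ 1 :=
    Real.rpow_le_one_of_one_le_of_nonpos hτ (by norm_num)
  have hδle : δ ≤ r := le_trans (by nlinarith) (min_le_left r 1)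
  have hsq : (τ ^ (-(1 / 2) : ℝ)) ^ 2 * τ = 1 := by
    rw [← Real.rpow_natCast (τ ^ (-(1 / 2) : ℝ)) 2, ← Real.rpow_mul hτ0.le]
    norm_num
    exact Real.rpow_neg_one τ ▸ inv_mul_cancel₀ hτ0.ne'
  have hδτ : δ ^ 2 * τ ≤ 1 := by
    have : δ ^ 2 * τ = b ^ 2 * ((τ ^ (-(1 / 2) : ℝ)) ^ 2 * τ) := by ring
    rw [this, hsq]; nlinarith
  have key : ∀ ξ ∈ Set.Ioo (ξ₀ - δ) (ξ₀ + δ),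
      c ≤ ‖θ ξ‖ ^ 2 / (1 + (ξ - ξ₀) ^ 2 * ‖θ ξ‖ ^ 2 * τ) := by
    intro ξ hξ
    obtain ⟨h1, h2⟩ := hξ
    have ht : m ≤ ‖θ ξ‖ := hmle ξ ⟨by linarith, by linarith⟩
    set t := ‖θ ξ‖ with htdef
    have ht0 : 0 ≤ t := norm_nonneg _
    have hs : (ξ - ξ₀) ^ 2 ≤ δ ^ 2 := by nlinarith
    have ha : (ξ - ξ₀) ^ 2 * τ ≤ 1 := by nlinarith
    have hden : (0 : ℝ) < 1 + (ξ - ξ₀) ^ 2 * t ^ 2 * τ := by positivity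
    rw [hcdef, div_le_div_iff₀ (by positivity) hden]
    have h3 : (ξ - ξ₀) ^ 2 * τ * (m ^ 2 * t ^ 2) ≤ 1 * (m ^ 2 * t ^ 2) :=
      mul_le_mul_of_nonneg_right ha (by positivity)
    nlinarith [sq_nonneg t, sq_nonneg m]
  have hmeasg : Measurable fun ξ : ℝ =>
      ENNReal.ofReal (‖θ ξ‖ ^ 2 / (1 + (ξ - ξ₀) ^ 2 * ‖θ ξ‖ ^ 2 * τ)) := by
    apply Measurable.ennreal_ofReal
    exact ((hθm.norm.pow_const 2).div (((measurable_id.sub_const ξ₀).pow_const 2).mul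
      (hθm.norm.pow_const 2) |>.mul_const τ |>.const_add 1))
  calc ENNReal.ofReal (c * b * τ ^ (-(1 / 2) : ℝ))
      ≤ ENNReal.ofReal c * volume (Set.Ioo (ξ₀ - δ) (ξ₀ + δ)) := by
        rw [Real.volume_Ioo, ← ENNReal.ofReal_mul hc.le]
        apply ENNReal.ofReal_le_ofReal
        have : ξ₀ + δ - (ξ₀ - δ) = 2 * δ := by ring
        rw [this, hδdef]; nlinarith
    _ = ∫⁻ _ξ in Set.Ioo (ξ₀ - δ) (ξ₀ + δ), ENNReal.ofReal c := by
        rw [setLIntegral_const, mul_comm]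
    _ ≤ ∫⁻ ξ in Set.Ioo (ξ₀ - δ) (ξ₀ + δ),
          ENNReal.ofReal (‖θ ξ‖ ^ 2 / (1 + (ξ - ξ₀) ^ 2 * ‖θ ξ‖ ^ 2 * τ)) := by
        apply setLIntegral_mono hmeasg
        intro ξ hξ
        exact ENNReal.ofReal_le_ofReal (key ξ hξ)
    _ ≤ ∫⁻ ξ : ℝ, ENNReal.ofReal (‖θ ξ‖ ^ 2 / (1 + (ξ - ξ₀) ^ 2 * ‖θ ξ‖ ^ 2 * τ)) :=
        setLIntegral_le_lintegral _ _
end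

section
/- Let c₀ > 0, ξ₀ ∈ ℝ, A₀ : ℝ → ℂ bounded measurable, and suppose there is an open interval I ∋ ξ₀ with inf_{ξ∈I} |A₀(ξ)| > 0. Then there is C₂ > 0 such that for all t ≥ e, (∫_ℝ |A₀(ξ)|² / (1 + 2c₀(ξ - ξ₀)² |A₀(ξ)|² log t) dξ)^{1/2} ≥ C₂ (log t)^{-1/4}. -/
open MeasureTheory

/-!
Write `u = |A₀|²` and `κ = 2c₀ log t`. The integrand `u / (1 + κ (ξ - ξ₀)² u)` is bounded by
`u` and by `1 / (κ (ξ - ξ₀)²)`, hence integrable. On the window `|ξ - ξ₀| < δ` with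
`δ = ρ / √(log t)`, `ρ = min r 1` (inside `I` since `log t ≥ 1`), we have `κ δ² = 2c₀ρ²`,
independent of `t`, so there the integrand is bounded below by a positive constant; the window
has length `2δ ∝ (log t)^{-1/2}`, and taking the square root gives `(log t)^{-1/4}`.
-/

lemma ae_norm_le_toReal_eLpNorm_top {α E : Type*} [MeasurableSpace α] [NormedAddCommGroup E]
    {μ : Measure α} {f : α → E} (hf : eLpNorm f ⊤ μ ≠ ⊤) :
    ∀ᵐ x ∂μ, ‖f x‖ ≤ (eLpNorm f ⊤ μ).toReal := by
  filter_upwards [ae_le_eLpNormEssSup (f := f) (μ := μ)] with x hx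
  rw [eLpNorm_exponent_top, ← toReal_enorm]
  exact ENNReal.toReal_mono (by rwa [eLpNorm_exponent_top] at hf) hx

noncomputable def dampedProfile (u : ℝ → ℝ) (κ x₀ x : ℝ) : ℝ :=
  u x / (1 + κ * (x - x₀) ^ 2 * u x)

namespace dampedProfile

variable {u : ℝ → ℝ} {κ x₀ x : ℝ}

lemma one_le_denom (hu : 0 ≤ u x) (hκ : 0 ≤ κ) : 1 ≤ 1 + κ * (x - x₀) ^ 2 * u x := by
  have : 0 ≤ κ * (x - x₀) ^ 2 * u x := by positivity
  linarith

lemma nonneg (hu : 0 ≤ u x) (hκ : 0 ≤ κ) : 0 ≤ dampedProfile u κ x₀ x :=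
  div_nonneg hu (zero_le_one.trans (one_le_denom hu hκ))

lemma le_self (hu : 0 ≤ u x) (hκ : 0 ≤ κ) : dampedProfile u κ x₀ x ≤ u x :=
  div_le_self hu (one_le_denom hu hκ)

lemma mul_sq_le (hu : 0 ≤ u x) (hκ : 0 < κ) :
    dampedProfile u κ x₀ x * (x - x₀) ^ 2 ≤ κ⁻¹ := by
  have hd := one_le_denom (x₀ := x₀) hu hκ.le
  rw [dampedProfile, div_mul_eq_mul_div, div_le_iff₀ (by linarith), inv_mul_eq_div,
    le_div_iff₀ hκ]
  nlinarith

lemma integrable (hum : Measurable u) (hu : ∀ x, 0 ≤ u x) {K : ℝ} (huK : ∀ᵐ x, u x ≤ K)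
    (hκ : 0 < κ) : Integrable (dampedProfile u κ x₀) := by
  have hdom : Integrable fun x : ℝ ↦ (K + κ⁻¹) * (1 + (x - x₀) ^ 2)⁻¹ :=
    (integrable_inv_one_add_sq.comp_sub_right x₀).const_mul _
  refine hdom.mono' (Measurable.aestronglyMeasurable (by unfold dampedProfile; fun_prop)) ?_
  filter_upwards [huK] with x hxK
  rw [Real.norm_of_nonneg (nonneg (hu x) hκ.le), ← div_eq_mul_inv,
    le_div_iff₀ (by positivity), mul_one_add]
  exact add_le_add ((le_self (hu x) hκ.le).trans hxK) (mul_sq_le (hu x) hκ)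

lemma div_le_of_abs_le {m δ : ℝ} (hm : 0 ≤ m) (hmu : m ≤ u x) (hκ : 0 ≤ κ)
    (hx : |x - x₀| ≤ δ) : m / (1 + κ * δ ^ 2 * m) ≤ dampedProfile u κ x₀ x := by
  have hxδ : (x - x₀) ^ 2 ≤ δ ^ 2 := sq_le_sq' (abs_le.1 hx).1 (abs_le.1 hx).2
  have hd := one_le_denom (x₀ := x₀) (hm.trans hmu) hκ
  have hδ : 0 ≤ κ * δ ^ 2 := by positivity
  rw [dampedProfile, div_le_div_iff₀ (by positivity) (by linarith)]
  nlinarith [mul_le_mul_of_nonneg_left hxδ hκ, mul_nonneg hm (hm.trans hmu)]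

lemma le_integral {m δ : ℝ} (hint : Integrable (dampedProfile u κ x₀)) (hu : ∀ x, 0 ≤ u x)
    (hκ : 0 ≤ κ) (hm : 0 ≤ m) (hδ : 0 ≤ δ) (hmu : ∀ x ∈ Set.Ioo (x₀ - δ) (x₀ + δ), m ≤ u x) :
    2 * δ * (m / (1 + κ * δ ^ 2 * m)) ≤ ∫ x, dampedProfile u κ x₀ x := by
  have hlow : ∀ x ∈ Set.Ioo (x₀ - δ) (x₀ + δ), m / (1 + κ * δ ^ 2 * m) ≤
      dampedProfile u κ x₀ x := fun x hx ↦
    div_le_of_abs_le hm (hmu x hx) hκ (abs_sub_le_iff.2 ⟨by linarith [hx.2], by linarith [hx.1]⟩)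
  calc 2 * δ * (m / (1 + κ * δ ^ 2 * m))
      = (volume (Set.Ioo (x₀ - δ) (x₀ + δ))).toReal * (m / (1 + κ * δ ^ 2 * m)) := by
        rw [Real.volume_Ioo, ENNReal.toReal_ofReal (by linarith)]; ring
    _ ≤ ∫ x in Set.Ioo (x₀ - δ) (x₀ + δ), dampedProfile u κ x₀ x := by
        rw [mul_comm]
        exact setIntegral_ge_of_const_le_real measurableSet_Ioo
          (by simp [Real.volume_Ioo]) hlow hint.integrableOn
    _ ≤ ∫ x, dampedProfile u κ x₀ x :=
        setIntegral_le_integral hint (.of_forall fun x ↦ nonneg (hu x) hκ)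

lemma mul_inv_sqrt_le_integral {c L m ρ : ℝ} (hint : Integrable (dampedProfile u (c * L) x₀))
    (hu : ∀ x, 0 ≤ u x) (hc : 0 ≤ c) (hL : 0 < L) (hm : 0 ≤ m) (hρ : 0 ≤ ρ)
    (hmu : ∀ x ∈ Set.Ioo (x₀ - ρ / √L) (x₀ + ρ / √L), m ≤ u x) :
    2 * ρ * (m / (1 + c * ρ ^ 2 * m)) * (√L)⁻¹ ≤ ∫ x, dampedProfile u (c * L) x₀ x := by
  have hκδ : c * L * (ρ / √L) ^ 2 = c * ρ ^ 2 := by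
    rw [div_pow, Real.sq_sqrt hL.le]; field_simp
  have h := le_integral hint hu (by positivity) hm (by positivity) hmu
  rw [hκδ] at h
  exact le_of_eq_of_le (by ring) h

end dampedProfile

lemma Real.rpow_neg_one_div_four {x : ℝ} (hx : 0 ≤ x) : x ^ (-(1 / 4) : ℝ) = √(√x)⁻¹ := by
  rw [Real.sqrt_eq_rpow, Real.sqrt_eq_rpow, ← Real.rpow_neg hx, ← Real.rpow_mul hx]
  norm_num

/-- If |A₀| is bounded below near ξ₀, then for t ≥ e the square root of
    ∫ |A₀(ξ)|²/(1+2c₀(ξ-ξ₀)²|A₀(ξ)|² log t) dξ is at least C₂ (log t)^{-1/4}. -/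
theorem stmt_10 (c₀ : ℝ) (hc₀ : 0 < c₀) (ξ₀ : ℝ) (A₀ : ℝ → ℂ) (hA₀m : Measurable A₀)
    (hA₀b : eLpNorm A₀ ⊤ volume < ⊤)
    (hI : ∃ r > (0 : ℝ), 0 < ⨅ ξ : Set.Ioo (ξ₀ - r) (ξ₀ + r), ‖A₀ (ξ : ℝ)‖) :
    ∃ C₂ > (0 : ℝ), ∀ t : ℝ, Real.exp 1 ≤ t →
      C₂ * (Real.log t) ^ (-(1 / 4) : ℝ)
        ≤ Real.sqrt (∫ ξ : ℝ,
            ‖A₀ ξ‖ ^ 2 / (1 + 2 * c₀ * (ξ - ξ₀) ^ 2 * ‖A₀ ξ‖ ^ 2 * Real.log t)) := by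
  obtain ⟨r, hr, hm⟩ := hI
  set m := ⨅ ξ : Set.Ioo (ξ₀ - r) (ξ₀ + r), ‖A₀ (ξ : ℝ)‖
  have hmA : ∀ ξ ∈ Set.Ioo (ξ₀ - r) (ξ₀ + r), m ≤ ‖A₀ ξ‖ := fun ξ hξ ↦
    ciInf_le ⟨0, by rintro _ ⟨_, rfl⟩; exact norm_nonneg _⟩ (⟨ξ, hξ⟩ : Set.Ioo _ _)
  set ρ := min r 1
  have hρ : 0 < ρ := lt_min hr one_pos
  set C := 2 * ρ * (m ^ 2 / (1 + 2 * c₀ * ρ ^ 2 * m ^ 2))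
  refine ⟨√C, by positivity, fun t ht ↦ ?_⟩
  set L := Real.log t
  have hL : 1 ≤ L := by
    rw [← Real.log_exp 1]; exact Real.log_le_log (Real.exp_pos 1) ht
  have hu : ∀ ξ, 0 ≤ ‖A₀ ξ‖ ^ 2 := fun ξ ↦ sq_nonneg _
  have hint := dampedProfile.integrable (x₀ := ξ₀) (hA₀m.norm.pow_const 2) hu
    ((ae_norm_le_toReal_eLpNorm_top hA₀b.ne).mono fun ξ h ↦ pow_le_pow_left₀ (norm_nonneg _) h 2)
    (by positivity : 0 < 2 * c₀ * L)
  have hwindow : ρ / √L ≤ r := (div_le_self hρ.le (Real.one_le_sqrt.2 hL)).trans (min_le_left r 1)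
  have hlow := dampedProfile.mul_inv_sqrt_le_integral hint hu (by positivity) (by positivity)
    (sq_nonneg m) hρ.le fun ξ hξ ↦ pow_le_pow_left₀ hm.le
      (hmA ξ (Set.Ioo_subset_Ioo (by linarith) (by linarith) hξ)) 2
  have hintegrand : (fun ξ ↦ ‖A₀ ξ‖ ^ 2 / (1 + 2 * c₀ * (ξ - ξ₀) ^ 2 * ‖A₀ ξ‖ ^ 2 * L)) =
      dampedProfile (fun ξ ↦ ‖A₀ ξ‖ ^ 2) (2 * c₀ * L) ξ₀ := by
    funext ξ; rw [dampedProfile]; ring_nf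
  rw [hintegrand, Real.rpow_neg_one_div_four (by linarith), ← Real.sqrt_mul (by positivity)]
  exact Real.sqrt_le_sqrt hlow
end

section
/- Let μ ∈ ℂ with Im μ ≤ 0, θ_∞ ∈ ℂ, Λ ∈ ℝ with 1 - 2(Im μ)Λ > 0 and 1 - 2 Im μ (|θ_∞|²σ + Λ) > 0 for all σ ≥ 0. Define A(τ) = θ_∞ exp(-i|θ_∞|² (Re μ) ∫_0^τ dσ/(1 - 2 Im μ(|θ_∞|²σ + Λ))) / √(1 - 2 Im μ(|θ_∞|²τ + Λ)). Then A is differentiable on [0,∞) and satisfies i A'(τ) = μ |A(τ)|² A(τ) with A(0) = θ_∞ / √(1 - 2(Im μ)Λ). -/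
/-! With `D τ = 1 - 2 Im μ (‖θ∞‖² τ + Λ)`, so that `D' = -2 Im μ ‖θ∞‖²`, the function
`A = θ∞ exp (-i ‖θ∞‖² Re μ ∫₀^τ 1/D) / √D` has logarithmic derivative
`-i ‖θ∞‖² Re μ / D - D' / (2 D) = -i μ ‖θ∞‖² / D`.
The exponential factor has modulus one, so `‖A‖² = ‖θ∞‖² / D` and `A' = -i μ ‖A‖² A`. -/

open Complex

theorem hasDerivAt_integral_one_div {f : ℝ → ℝ} {a τ : ℝ} (hf : Continuous f)
    (hne : ∀ σ ∈ Set.uIcc a τ, f σ ≠ 0) :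
    HasDerivAt (fun t => ∫ σ in a..t, 1 / f σ) (1 / f τ) τ :=
  intervalIntegral.integral_hasDerivAt_right
    ((continuousOn_const.div hf.continuousOn hne).intervalIntegrable)
    (measurable_const.div hf.measurable).stronglyMeasurable.stronglyMeasurableAtFilter
    (continuousAt_const.div hf.continuousAt (hne τ Set.right_mem_uIcc))

theorem hasDerivAt_const_mul_cexp_div_sqrt {g f : ℝ → ℝ} {g' f' τ : ℝ} (θ c : ℂ)
    (hg : HasDerivAt g g' τ) (hf : HasDerivAt f f' τ) (hfτ : 0 < f τ) :
    HasDerivAt (fun t => θ * exp (c * (g t : ℂ)) / (√(f t) : ℂ))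
      (θ * exp (c * (g τ : ℂ)) / (√(f τ) : ℂ) * (c * g' - f' / (2 * f τ) : ℂ)) τ := by
  have hS : (√(f τ) : ℂ) ≠ 0 := by exact_mod_cast (Real.sqrt_pos.mpr hfτ).ne'
  have hSsq : (√(f τ) : ℂ) ^ 2 = f τ := by exact_mod_cast Real.sq_sqrt hfτ.le
  refine (((hg.ofReal_comp.const_mul c).cexp.const_mul θ).div
    (hf.sqrt hfτ.ne').ofReal_comp hS).congr_deriv ?_
  push_cast
  rw [← hSsq]
  field_simp

theorem norm_mul_cexp_div_sqrt_sq (θ : ℂ) {c : ℂ} (hc : c.re = 0) (x : ℝ) {y : ℝ}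
    (hy : 0 ≤ y) : ‖θ * exp (c * (x : ℂ)) / (√y : ℂ)‖ ^ 2 = ‖θ‖ ^ 2 / y := by
  rw [norm_div, norm_mul, norm_exp, re_mul_ofReal, hc, zero_mul, Real.exp_zero, mul_one,
    norm_real, Real.norm_of_nonneg (Real.sqrt_nonneg y), div_pow, Real.sq_sqrt hy]

theorem stmt_15_general (μ : ℂ) (θinf : ℂ) (Λ : ℝ)
    (hpos : ∀ σ : ℝ, 0 ≤ σ → 0 < 1 - 2 * μ.im * (‖θinf‖ ^ 2 * σ + Λ))
    (A : ℝ → ℂ)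
    (hA : ∀ τ : ℝ, A τ =
      θinf * Complex.exp (-Complex.I * (‖θinf‖ ^ 2 : ℂ) * (μ.re : ℂ)
          * ((∫ σ in (0 : ℝ)..τ, 1 / (1 - 2 * μ.im * (‖θinf‖ ^ 2 * σ + Λ))) : ℝ))
        / ((Real.sqrt (1 - 2 * μ.im * (‖θinf‖ ^ 2 * τ + Λ)) : ℝ) : ℂ)) :
    (∀ τ : ℝ, 0 ≤ τ →
      HasDerivAt A (-Complex.I * (μ * (‖A τ‖ : ℂ) ^ 2 * A τ)) τ) ∧
    A 0 = θinf / ((Real.sqrt (1 - 2 * μ.im * Λ) : ℝ) : ℂ) := by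
  set c : ℂ := -I * (‖θinf‖ ^ 2 : ℂ) * (μ.re : ℂ)
  refine ⟨fun τ hτ => ?_, by simp [hA]⟩
  have hfτ := hpos τ hτ
  have hf : HasDerivAt (fun σ => 1 - 2 * μ.im * (‖θinf‖ ^ 2 * σ + Λ))
      (-(2 * μ.im * ‖θinf‖ ^ 2)) τ := by
    simpa using (((hasDerivAt_id τ).const_mul (‖θinf‖ ^ 2)).add_const Λ
      |>.const_mul (2 * μ.im)).const_sub 1
  have hg := hasDerivAt_integral_one_div (a := 0) (τ := τ)
    (f := fun σ => 1 - 2 * μ.im * (‖θinf‖ ^ 2 * σ + Λ)) (by fun_prop) fun σ hσ =>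
      (hpos σ (by rw [Set.uIcc_of_le hτ] at hσ; exact hσ.1)).ne'
  have hD := hasDerivAt_const_mul_cexp_div_sqrt θinf c hg hf hfτ
  rw [← hA τ, show (fun t => _) = A from (funext hA).symm] at hD
  refine hD.congr_deriv ?_
  have hnorm : ‖A τ‖ ^ 2 = ‖θinf‖ ^ 2 / (1 - 2 * μ.im * (‖θinf‖ ^ 2 * τ + Λ)) :=
    (hA τ).symm ▸ norm_mul_cexp_div_sqrt_sq θinf (by simp [c, ← ofReal_pow]) _ hfτ.le
  rw [← ofReal_pow, hnorm]
  have hfτ' : ((1 - 2 * μ.im * (‖θinf‖ ^ 2 * τ + Λ) : ℝ) : ℂ) ≠ 0 := by exact_mod_cast hfτ.ne'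
  push_cast at hfτ' ⊢
  field_simp
  linear_combination (-I * (‖θinf‖ : ℂ) ^ 2 * A τ) * re_add_im μ
    + ((μ.im : ℂ) * (‖θinf‖ : ℂ) ^ 2 * A τ) * I_sq

/-- The explicit function A(τ) built from θ_∞, Λ, μ solves i A' = μ|A|²A with
    A(0) = θ_∞/√(1 - 2(Im μ)Λ). -/
theorem stmt_15 (μ : ℂ) (hμ : μ.im ≤ 0) (θinf : ℂ) (Λ : ℝ)
    (hΛ : 0 < 1 - 2 * μ.im * Λ)
    (hpos : ∀ σ : ℝ, 0 ≤ σ → 0 < 1 - 2 * μ.im * (‖θinf‖ ^ 2 * σ + Λ))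
    (A : ℝ → ℂ)
    (hA : ∀ τ : ℝ, A τ =
      θinf * Complex.exp (-Complex.I * (‖θinf‖ ^ 2 : ℂ) * (μ.re : ℂ)
          * ((∫ σ in (0 : ℝ)..τ, 1 / (1 - 2 * μ.im * (‖θinf‖ ^ 2 * σ + Λ))) : ℝ))
        / ((Real.sqrt (1 - 2 * μ.im * (‖θinf‖ ^ 2 * τ + Λ)) : ℝ) : ℂ)) :
    (∀ τ : ℝ, 0 ≤ τ →
      HasDerivAt A (-Complex.I * (μ * (‖A τ‖ : ℂ) ^ 2 * A τ)) τ) ∧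
    A 0 = θinf / ((Real.sqrt (1 - 2 * μ.im * Λ) : ℝ) : ℂ) :=
  stmt_15_general μ θinf Λ hpos A hA
end
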